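/- Let (C, E, s) be an extriangulated category, I ⊆ X full additive subcategories with I strongly covariantly finite in X (every X-object admits an inflation into I which is a left I-approximation). If E^I(I, X) = 0, then the functor ⟨1⟩ : X/[I] → X⟨1⟩/[I], sending X to the cone of a left I-approximation inflation, is an equivalence of categories. -/

import Mathlib

/-!
STATEMENT 19: with E^I(I, X) = 0, the shift ⟨1⟩ : X/[I] ⥤ X⟨1⟩/[I] is an equivalence.
-/

set_option linter.unusedSectionVars false

open CategoryTheory CategoryTheory.Limits Opposite

universe v u

variable (C : Type u) [Category.{v} C] [Preadditive C] [HasZeroObject C] [HasBinaryBiproducts C]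

/-- An extriangulated category structure on `C` (Nakaoka–Palu): an additive bifunctor
`E : Cᵒᵖ × C ⥤ Ab` together with an additive realization of extensions by conflations,
subject to the axioms (ET1)–(ET4) and their duals.  The realization is encoded by the
predicate `conf f g δ` expressing that `X ⟶ Y ⟶ Z` realizes `δ ∈ E(Z, X)`. -/
structure ETStruct where
  /-- the extension bifunctor (ET1) -/
  E : Cᵒᵖ ⥤ C ⥤ AddCommGrpCat.{v}
  /-- `E` is additive in the contravariant variable -/
  additive_op : E.Additive
  /-- `E` is additive in the covariant variable -/
  additive : ∀ Z : Cᵒᵖ, (E.obj Z).Additive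
  /-- `conf f g δ` : the sequence `f, g` realizes the extension `δ` (it is an s-conflation) -/
  conf : ∀ ⦃X Y Z : C⦄, (X ⟶ Y) → (Y ⟶ Z) → ((E.obj (op Z)).obj X) → Prop
  /-- every extension is realized by some conflation (ET2) -/
  exists_real : ∀ ⦃X Z : C⦄ (δ : (E.obj (op Z)).obj X),
      ∃ (Y : C) (f : X ⟶ Y) (g : Y ⟶ Z), conf f g δ
  comp_zero : ∀ ⦃X Y Z : C⦄ ⦃f : X ⟶ Y⦄ ⦃g : Y ⟶ Z⦄ ⦃δ : (E.obj (op Z)).obj X⦄,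
      conf f g δ → f ≫ g = 0
  /-- realizations are well defined up to equivalence of three-term sequences -/
  conf_iso : ∀ ⦃X Y Y' Z : C⦄ ⦃f : X ⟶ Y⦄ ⦃g : Y ⟶ Z⦄ ⦃δ : (E.obj (op Z)).obj X⦄
      (e : Y ≅ Y'), conf f g δ → conf (f ≫ e.hom) (e.inv ≫ g) δ
  /-- the realization is additive: `0` is realized by the split conflation -/
  conf_zero : ∀ (X Z : C), conf (biprod.inl : X ⟶ X ⊞ Z) (biprod.snd : X ⊞ Z ⟶ Z)
      (0 : (E.obj (op Z)).obj X)
  /-- conversely, a conflation realizing `0` splits -/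
  split_of_zero : ∀ ⦃X Y Z : C⦄ ⦃f : X ⟶ Y⦄ ⦃g : Y ⟶ Z⦄,
      conf f g (0 : (E.obj (op Z)).obj X) → ∃ s : Z ⟶ Y, s ≫ g = 𝟙 Z
  /-- (ET3) -/
  et3 : ∀ ⦃X Y Z X' Y' Z' : C⦄ ⦃f : X ⟶ Y⦄ ⦃g : Y ⟶ Z⦄ ⦃δ : (E.obj (op Z)).obj X⦄
      ⦃f' : X' ⟶ Y'⦄ ⦃g' : Y' ⟶ Z'⦄ ⦃δ' : (E.obj (op Z')).obj X'⦄
      (a : X ⟶ X') (b : Y ⟶ Y'), conf f g δ → conf f' g' δ' → f ≫ b = a ≫ f' →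
      ∃ c : Z ⟶ Z', g ≫ c = b ≫ g' ∧
        (E.map c.op).app X' δ' = ((E.obj (op Z)).map a) δ
  /-- (ET3)ᵒᵖ -/
  et3op : ∀ ⦃X Y Z X' Y' Z' : C⦄ ⦃f : X ⟶ Y⦄ ⦃g : Y ⟶ Z⦄ ⦃δ : (E.obj (op Z)).obj X⦄
      ⦃f' : X' ⟶ Y'⦄ ⦃g' : Y' ⟶ Z'⦄ ⦃δ' : (E.obj (op Z')).obj X'⦄
      (b : Y ⟶ Y') (c : Z ⟶ Z'), conf f g δ → conf f' g' δ' → g ≫ c = b ≫ g' →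
      ∃ a : X ⟶ X', f ≫ b = a ≫ f' ∧
        (E.map c.op).app X' δ' = ((E.obj (op Z)).map a) δ
  /-- (ET4) -/
  et4 : ∀ ⦃X Y Z Cc Dd : C⦄ ⦃f : X ⟶ Y⦄ ⦃f' : Y ⟶ Cc⦄ ⦃δ : (E.obj (op Cc)).obj X⦄
      ⦃g : Y ⟶ Z⦄ ⦃g' : Z ⟶ Dd⦄ ⦃ε : (E.obj (op Dd)).obj Y⦄,
      conf f f' δ → conf g g' ε →
      ∃ (Ee : C) (h' : Z ⟶ Ee) (δ' : (E.obj (op Ee)).obj X) (c : Cc ⟶ Ee) (d : Ee ⟶ Dd),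
        conf (f ≫ g) h' δ' ∧ conf c d (((E.obj (op Dd)).map f') ε) ∧
        f' ≫ c = g ≫ h' ∧ h' ≫ d = g' ∧ (E.map c.op).app X δ' = δ
  /-- long-exact-sequence property: `δ` pulled back along `h` vanishes iff `h` lifts -/
  pull_zero_iff : ∀ ⦃X Y Z : C⦄ ⦃f : X ⟶ Y⦄ ⦃g : Y ⟶ Z⦄ ⦃δ : (E.obj (op Z)).obj X⦄,
      conf f g δ → ∀ ⦃W : C⦄ (h : W ⟶ Z),
        ((E.map h.op).app X δ = 0 ↔ ∃ k : W ⟶ Y, k ≫ g = h)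
  /-- long-exact-sequence property: `δ` pushed forward along `h` vanishes iff `h` extends -/
  push_zero_iff : ∀ ⦃X Y Z : C⦄ ⦃f : X ⟶ Y⦄ ⦃g : Y ⟶ Z⦄ ⦃δ : (E.obj (op Z)).obj X⦄,
      conf f g δ → ∀ ⦃W : C⦄ (h : X ⟶ W),
        (((E.obj (op Z)).map h) δ = 0 ↔ ∃ k : Y ⟶ W, f ≫ k = h)

namespace ETStruct

variable {C}
variable (T : ETStruct C)

/-- The group of `E`-extensions of `Z` by `X`. -/
abbrev ext (Z X : C) : Type v := (T.E.obj (op Z)).obj X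

/-- Push-forward `a · δ` of an extension along `a : X ⟶ X'`. -/
def push {X X' Z : C} (a : X ⟶ X') (δ : T.ext Z X) : T.ext Z X' :=
  ((T.E.obj (op Z)).map a) δ

/-- Pull-back `δ · b` of an extension along `b : Z' ⟶ Z`. -/
def pull {Z' Z X : C} (b : Z' ⟶ Z) (δ : T.ext Z X) : T.ext Z' X :=
  ((T.E.map b.op).app X) δ

/-- `δ ∈ E_I(Z, X)`: `δ` pulls back to zero from every object of `I`. -/
def memDown (I : Set C) {Z X : C} (δ : T.ext Z X) : Prop :=
  ∀ ⦃W : C⦄, W ∈ I → ∀ f : W ⟶ Z, T.pull f δ = 0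

/-- `δ ∈ E^I(Z, X)`: `δ` pushes forward to zero into every object of `I`. -/
def memUp (I : Set C) {Z X : C} (δ : T.ext Z X) : Prop :=
  ∀ ⦃W : C⦄, W ∈ I → ∀ g : X ⟶ W, T.push g δ = 0

end ETStruct

/-- `f : d ⟶ X` is a right `D`-approximation. -/
def RightApprox (D : Set C) {d X : C} (f : d ⟶ X) : Prop :=
  ∀ ⦃d' : C⦄, d' ∈ D → ∀ g : d' ⟶ X, ∃ h : d' ⟶ d, h ≫ f = g

/-- `f : X ⟶ d` is a left `D`-approximation. -/
def LeftApprox (D : Set C) {X d : C} (f : X ⟶ d) : Prop :=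
  ∀ ⦃d' : C⦄, d' ∈ D → ∀ g : X ⟶ d', ∃ h : d ⟶ d', f ≫ h = g

def ClosedSummands (D : Set C) : Prop :=
  ∀ ⦃X Y : C⦄, X ∈ D → ∀ (i : Y ⟶ X) (p : X ⟶ Y), i ≫ p = 𝟙 Y → Y ∈ D

variable {C}

namespace ETStruct

variable (T : ETStruct C)

/-- `I` is strongly contravariantly finite in `Xc`: every `X ∈ Xc` admits a deflation
from an object of `I` which is a right `I`-approximation. -/
def StronglyContraFinite (I Xc : Set C) : Prop :=
  ∀ ⦃X : C⦄, X ∈ Xc → ∃ W ∈ I, ∃ p : W ⟶ X, RightApprox C I p ∧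
    ∃ (X' : C) (i : X' ⟶ W) (δ : T.ext X X'), T.conf i p δ

/-- `I` is strongly covariantly finite in `Xc`: every `X ∈ Xc` admits an inflation
into an object of `I` which is a left `I`-approximation. -/
def StronglyCovFinite (I Xc : Set C) : Prop :=
  ∀ ⦃X : C⦄, X ∈ Xc → ∃ W ∈ I, ∃ i : X ⟶ W, LeftApprox C I i ∧
    ∃ (Z : C) (p : W ⟶ Z) (δ : T.ext Z X), T.conf i p δ

/-- `Cone_P(A, B)`: objects `Z` admitting a conflation `A' ⟶ B' ⟶ Z` whose extension
class satisfies `P` (e.g. lies in `E^I` or `E_I`), with `A' ∈ A` and `B' ∈ B`. -/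
def coneRel (P : ∀ ⦃Z X : C⦄, T.ext Z X → Prop) (A B : Set C) : Set C :=
  {Z | ∃ (A' B' : C) (_ : A' ∈ A) (_ : B' ∈ B) (f : A' ⟶ B') (g : B' ⟶ Z)
      (δ : T.ext Z A'), T.conf f g δ ∧ P δ}

/-- `CoCone_P(A, B)`: objects `W` admitting a conflation `W ⟶ A' ⟶ B'` whose extension
class satisfies `P`, with `A' ∈ A` and `B' ∈ B`. -/
def coconeRel (P : ∀ ⦃Z X : C⦄, T.ext Z X → Prop) (A B : Set C) : Set C :=
  {W | ∃ (A' B' : C) (_ : A' ∈ A) (_ : B' ∈ B) (f : W ⟶ A') (g : A' ⟶ B')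
      (δ : T.ext B' W), T.conf f g δ ∧ P δ}

/-- `E^I(A, B) = 0` (`A` in the contravariant slot). -/
def vanishUp (I A B : Set C) : Prop :=
  ∀ ⦃Z X : C⦄, Z ∈ A → X ∈ B → ∀ δ : T.ext Z X, T.memUp I δ → δ = 0

/-- `E_I(A, B) = 0` (`A` in the contravariant slot). -/
def vanishDown (I A B : Set C) : Prop :=
  ∀ ⦃Z X : C⦄, Z ∈ A → X ∈ B → ∀ δ : T.ext Z X, T.memDown I δ → δ = 0

/-- `A` is closed under extensions in `(C, E^I)`. -/
def extClosedUp (I A : Set C) : Prop :=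
  ∀ ⦃X Y Z : C⦄ ⦃f : X ⟶ Y⦄ ⦃g : Y ⟶ Z⦄ ⦃δ : T.ext Z X⦄,
    T.conf f g δ → T.memUp I δ → X ∈ A → Z ∈ A → Y ∈ A

/-- `A` is closed under extensions in `(C, E_I)`. -/
def extClosedDown (I A : Set C) : Prop :=
  ∀ ⦃X Y Z : C⦄ ⦃f : X ⟶ Y⦄ ⦃g : Y ⟶ Z⦄ ⦃δ : T.ext Z X⦄,
    T.conf f g δ → T.memDown I δ → X ∈ A → Z ∈ A → Y ∈ A

/-- `Z⟨1⟩ = Cone_{E^I}(Z, I)`. -/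
def shiftPlus (I Zc : Set C) : Set C := T.coneRel (fun _ _ δ => T.memUp I δ) Zc I

/-- `Z⟨-1⟩ = CoCone_{E_I}(I, Z)`. -/
def shiftMinus (I Zc : Set C) : Set C := T.coconeRel (fun _ _ δ => T.memDown I δ) I Zc

/-- `Ũ = CoCone_{E^I}(Z, S)`. -/
def Utilde (I Sc Zc : Set C) : Set C := T.coconeRel (fun _ _ δ => T.memUp I δ) Zc Sc

/-- `T̃ = Cone_{E_I}(V, Z)`. -/
def Ttilde (I Zc Vc : Set C) : Set C := T.coneRel (fun _ _ δ => T.memDown I δ) Vc Zc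

end ETStruct

section IdealQuotient

/-- `f` factors through an object of `I`. -/
def FactorsThru (I : Set C) {X Y : C} (f : X ⟶ Y) : Prop :=
  ∃ (W : C) (_ : W ∈ I) (p : X ⟶ W) (q : W ⟶ Y), f = p ≫ q

/-- Morphisms of the full subcategory on `Z` are identified when their difference factors
through an object of `I`; the quotient is the additive quotient `Z/[I]`. -/
def idealRel (I Z : Set C) : HomRel (ObjectProperty.FullSubcategory (· ∈ Z)) :=
  fun {_ _} f g => FactorsThru I (f.hom - g.hom)

/-- The additive quotient `Z/[I]`. -/
abbrev IdealQuotient (I Z : Set C) := CategoryTheory.Quotient (idealRel I Z)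

variable {I : Set C}

theorem factorsThru_zero (hne : I.Nonempty) (X Y : C) : FactorsThru I (0 : X ⟶ Y) := by
  obtain ⟨W, hW⟩ := hne
  exact ⟨W, hW, 0, 0, by simp⟩

theorem factorsThru_neg {X Y : C} {f : X ⟶ Y} (h : FactorsThru I f) :
    FactorsThru I (-f) := by
  obtain ⟨W, hW, p, q, rfl⟩ := h
  exact ⟨W, hW, -p, q, by simp⟩

theorem factorsThru_add (hbi : ∀ ⦃W W' : C⦄, W ∈ I → W' ∈ I → (W ⊞ W') ∈ I)
    {X Y : C} {f g : X ⟶ Y} (hf : FactorsThru I f) (hg : FactorsThru I g) :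
    FactorsThru I (f + g) := by
  obtain ⟨W, hW, p, q, rfl⟩ := hf
  obtain ⟨W', hW', p', q', rfl⟩ := hg
  exact ⟨W ⊞ W', hbi hW hW', biprod.lift p p', biprod.desc q q', by simp⟩

theorem factorsThru_comp_left {X' X Y : C} (f : X' ⟶ X) {g : X ⟶ Y}
    (hg : FactorsThru I g) : FactorsThru I (f ≫ g) := by
  obtain ⟨W, hW, p, q, rfl⟩ := hg
  exact ⟨W, hW, f ≫ p, q, by simp⟩

theorem factorsThru_comp_right {X Y Y' : C} {f : X ⟶ Y} (g : Y ⟶ Y')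
    (hf : FactorsThru I f) : FactorsThru I (f ≫ g) := by
  obtain ⟨W, hW, p, q, rfl⟩ := hf
  exact ⟨W, hW, p, q ≫ g, by simp⟩

theorem idealRel_congruence (Z : Set C) (hne : I.Nonempty)
    (hbi : ∀ ⦃W W' : C⦄, W ∈ I → W' ∈ I → (W ⊞ W') ∈ I) :
    Congruence (idealRel I Z) := by
  refine { comp_left := ?_, comp_right := ?_, equivalence := ?_ }
  · intro X Y Z' f g g' h
    have := factorsThru_comp_left (I := I) f.hom h
    simpa [idealRel, Preadditive.comp_sub] using this
  · intro X Y Z' f f' g h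
    have := factorsThru_comp_right (I := I) g.hom h
    simpa [idealRel, Preadditive.sub_comp] using this
  · intro X Y
    constructor
    · intro f
      simpa [idealRel, sub_self] using factorsThru_zero hne X.obj Y.obj
    · intro f g h
      simpa [idealRel, neg_sub] using factorsThru_neg h
    · intro f g k hfg hgk
      have := factorsThru_add hbi hfg hgk
      simpa [idealRel, sub_add_sub_cancel] using this

/-- The preadditive structure on the ideal quotient `Z/[I]`. -/
def quotPreadditive (Z : Set C) (hne : I.Nonempty)
    (hbi : ∀ ⦃W W' : C⦄, W ∈ I → W' ∈ I → (W ⊞ W') ∈ I) :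
    Preadditive (IdealQuotient I Z) :=
  letI : Congruence (idealRel I Z) := idealRel_congruence Z hne hbi
  Quotient.preadditive (idealRel I Z) (by
    intro X Y f₁ f₂ g₁ g₂ h₁ h₂
    have := factorsThru_add hbi h₁ h₂
    change FactorsThru I ((f₁.hom + g₁.hom) - (f₂.hom + g₂.hom))
    simpa [idealRel, add_sub_add_comm] using this)

/-- The inclusion functor `A/[I] ⥤ B/[I]` for `A ⊆ B`. -/
def idealInclusion (I A B : Set C) (hAB : A ⊆ B) :
    IdealQuotient I A ⥤ IdealQuotient I B :=
  CategoryTheory.Quotient.lift _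
    (ObjectProperty.ιOfLE (P := (· ∈ A)) (P' := (· ∈ B)) (fun _ hX => hAB hX) ⋙ CategoryTheory.Quotient.functor (idealRel I B))
    (fun _ _ _ _ h => CategoryTheory.Quotient.sound _ h)

end IdealQuotient

namespace ETStruct

variable (T : ETStruct C)

/-- A premutation triple `(S, Z, V)`: conditions (MT1) and (MT2), with
`I = S ∩ Z = Z ∩ V` strongly functorially finite in `Z`. -/
structure IsPremutationTriple (Sc Zc Vc : Set C) : Prop where
  sumS : ClosedSummands C Sc
  sumZ : ClosedSummands C Zc
  sumV : ClosedSummands C Vc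
  /-- (MT1): `S ∩ Z = Z ∩ V` -/
  inter_eq : Sc ∩ Zc = Zc ∩ Vc
  /-- (MT1): `I ⊆ Z` is strongly contravariantly finite -/
  strong_contra : T.StronglyContraFinite (Sc ∩ Zc) Zc
  /-- (MT1): `I ⊆ Z` is strongly covariantly finite -/
  strong_cov : T.StronglyCovFinite (Sc ∩ Zc) Zc
  /-- (MT2)(i): `E^I(S, Z) = 0` -/
  mt2_i₁ : T.vanishUp (Sc ∩ Zc) Sc Zc
  /-- (MT2)(i): `E_I(S, Z⟨-1⟩) = 0` -/
  mt2_i₂ : T.vanishDown (Sc ∩ Zc) Sc (T.shiftMinus (Sc ∩ Zc) Zc)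
  /-- (MT2)(ii): `E_I(Z, V) = 0` -/
  mt2_ii₁ : T.vanishDown (Sc ∩ Zc) Zc Vc
  /-- (MT2)(ii): `E^I(Z⟨1⟩, V) = 0` -/
  mt2_ii₂ : T.vanishUp (Sc ∩ Zc) (T.shiftPlus (Sc ∩ Zc) Zc) Vc

/-- A mutation triple: a premutation triple which moreover satisfies (MT3). -/
structure IsMutationTriple (Sc Zc Vc : Set C) : Prop extends T.IsPremutationTriple Sc Zc Vc where
  /-- (MT3)(i): `Cone_{E^I}(Z, Z) ⊆ Ũ` -/
  mt3_i₁ : T.coneRel (fun _ _ δ => T.memUp (Sc ∩ Zc) δ) Zc Zc ⊆ T.Utilde (Sc ∩ Zc) Sc Zc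
  /-- (MT3)(i): `CoCone_{E_I}(Z, Z) ⊆ T̃` -/
  mt3_i₂ : T.coconeRel (fun _ _ δ => T.memDown (Sc ∩ Zc) δ) Zc Zc ⊆ T.Ttilde (Sc ∩ Zc) Zc Vc
  /-- (MT3)(ii): `S` is closed under `E^I`-extensions -/
  mt3_ii_S : T.extClosedUp (Sc ∩ Zc) Sc
  /-- (MT3)(ii): `Z` is closed under `E^I`-extensions -/
  mt3_ii_Zup : T.extClosedUp (Sc ∩ Zc) Zc
  /-- (MT3)(ii): `Z` is closed under `E_I`-extensions -/
  mt3_ii_Zdown : T.extClosedDown (Sc ∩ Zc) Zc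
  /-- (MT3)(ii): `V` is closed under `E_I`-extensions -/
  mt3_ii_V : T.extClosedDown (Sc ∩ Zc) Vc

/-- A right mutation double `(S, Z)`: conditions (MT1), (RM2) and (RM3) (with `V := I`). -/
structure IsRightMutationDouble (Sc Zc : Set C) : Prop where
  sumS : ClosedSummands C Sc
  sumZ : ClosedSummands C Zc
  strong_contra : T.StronglyContraFinite (Sc ∩ Zc) Zc
  strong_cov : T.StronglyCovFinite (Sc ∩ Zc) Zc
  /-- (RM2): `E^I(S, Z) = 0` -/
  rm2₁ : T.vanishUp (Sc ∩ Zc) Sc Zc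
  /-- (RM2): `E_I(S, Z⟨-1⟩) = 0` -/
  rm2₂ : T.vanishDown (Sc ∩ Zc) Sc (T.shiftMinus (Sc ∩ Zc) Zc)
  /-- (RM3): `Cone_{E^I}(Z, Z) ⊆ Ũ` -/
  rm3₁ : T.coneRel (fun _ _ δ => T.memUp (Sc ∩ Zc) δ) Zc Zc ⊆ T.Utilde (Sc ∩ Zc) Sc Zc
  /-- (RM3): `S` is closed under `E^I`-extensions -/
  rm3_S : T.extClosedUp (Sc ∩ Zc) Sc
  /-- (RM3): `Z` is closed under `E^I`-extensions -/
  rm3_Z : T.extClosedUp (Sc ∩ Zc) Zc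

end ETStruct

/-!
Fix for every `X` an `E^I`-conflation `X ⟶ I^X ⟶ X⟨1⟩` with class `λ^X`, whose inflation is a
left `I`-approximation. A morphism `x : X ⟶ Y` is sent to any `c : X⟨1⟩ ⟶ Y⟨1⟩` with
`λ^Y · c = x · λ^X` (ET3); two such `c` differ by a morphism factoring through `I^Y ⟶ Y⟨1⟩`.
Since `E^I(I, X) = 0`, pulling `λ^Y` back along a morphism that factors through `I` kills it.
Faithfulness: if `c ≡ c'` modulo `[I]` then `x · λ^X = x' · λ^X`, so `x - x'` factors through
`X ⟶ I^X`. Fullness: for any `c`, the composite `I^X ⟶ X⟨1⟩ ⟶ Y⟨1⟩` lifts to `I^Y`, and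
ET3ᵒᵖ produces `x`. Density: the cones of any two `E^I`-conflations `X ⟶ J ⟶ W` with `J ∈ I`
are isomorphic modulo `[I]`.
-/

theorem CategoryTheory.Quotient.apply_eq_of_functor_map_eq {D : Type*} [Category D]
    {r : HomRel D} {X Y : D} {β : Sort*} (φ : (X ⟶ Y) → β)
    (hφ : ∀ f g, HomRel.CompClosure r f g → φ f = φ g) {f g : X ⟶ Y}
    (h : (Quotient.functor r).map f = (Quotient.functor r).map g) : φ f = φ g :=
  congrArg (Quot.lift φ hφ) h

theorem factorsThru_of_compClosure {I Z : Set C}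
    {X Y : ObjectProperty.FullSubcategory (· ∈ Z)} {f g : X ⟶ Y}
    (h : HomRel.CompClosure (idealRel I Z) f g) : FactorsThru I (f.hom - g.hom) := by
  obtain ⟨_, _, a, m₁, m₂, b, hm⟩ := h
  have hsub : (a ≫ m₁ ≫ b).hom - (a ≫ m₂ ≫ b).hom = a.hom ≫ (m₁.hom - m₂.hom) ≫ b.hom := by
    simp [Preadditive.sub_comp, Preadditive.comp_sub]
  rw [hsub]
  exact factorsThru_comp_left _ (factorsThru_comp_right _ hm)

namespace ETStruct

variable {T : ETStruct C}

theorem pull_comp {Z'' Z' Z X : C} (f : Z'' ⟶ Z') (g : Z' ⟶ Z) (δ : T.ext Z X) :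
    T.pull (f ≫ g) δ = T.pull f (T.pull g δ) := by
  simp [pull, op_comp]

theorem push_comp {X X' X'' Z : C} (f : X ⟶ X') (g : X' ⟶ X'') (δ : T.ext Z X) :
    T.push (f ≫ g) δ = T.push g (T.push f δ) := by
  simp [push]

theorem pull_id {Z X : C} (δ : T.ext Z X) : T.pull (𝟙 Z) δ = δ := by
  simp [pull]

theorem push_id {Z X : C} (δ : T.ext Z X) : T.push (𝟙 X) δ = δ := by
  simp [push]

theorem pull_push {Z' Z X X' : C} (f : Z' ⟶ Z) (g : X ⟶ X') (δ : T.ext Z X) :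
    T.pull f (T.push g δ) = T.push g (T.pull f δ) :=
  congrArg (fun φ => φ δ) ((T.E.map f.op).naturality g)

theorem pull_zero {Z' Z X : C} (f : Z' ⟶ Z) : T.pull f (0 : T.ext Z X) = 0 := by
  simp [pull]

theorem push_zero {Z X X' : C} (g : X ⟶ X') : T.push g (0 : T.ext Z X) = 0 := by
  simp [push]

theorem pull_sub {Z' Z X : C} (f g : Z' ⟶ Z) (δ : T.ext Z X) :
    T.pull (f - g) δ = T.pull f δ - T.pull g δ := by
  have := T.additive_op
  have hop : (f - g).op = f.op - g.op := rfl
  simp only [pull, hop, Functor.map_sub, NatTrans.app_sub]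
  rfl

theorem push_sub {Z X X' : C} (f g : X ⟶ X') (δ : T.ext Z X) :
    T.push (f - g) δ = T.push f δ - T.push g δ := by
  have := T.additive (op Z)
  simp only [push, Functor.map_sub]
  rfl

variable {I : Set C}

theorem memUp_pull {Z' Z X : C} (f : Z' ⟶ Z) {δ : T.ext Z X} (h : T.memUp I δ) :
    T.memUp I (T.pull f δ) := by
  intro W hW g
  rw [← pull_push, h hW g, pull_zero]

theorem memUp_of_leftApprox {X J W : C} {i : X ⟶ J} {p : J ⟶ W} {δ : T.ext W X}
    (hconf : T.conf i p δ) (hi : LeftApprox C I i) : T.memUp I δ := by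
  intro W' hW' g
  exact (T.push_zero_iff hconf g).mpr (hi hW' g)

theorem push_eq_zero_of_factorsThru {Z X Y : C} {δ : T.ext Z X} (hδ : T.memUp I δ)
    {x : X ⟶ Y} (hx : FactorsThru I x) : T.push x δ = 0 := by
  obtain ⟨J, hJ, u, v, rfl⟩ := hx
  rw [push_comp, hδ hJ u, push_zero]

theorem pull_eq_zero_of_factorsThru {Xc : Set C} (hvan : T.vanishUp I I Xc) {P Z X : C}
    (hX : X ∈ Xc) {δ : T.ext Z X} (hδ : T.memUp I δ) {d : P ⟶ Z} (hd : FactorsThru I d) :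
    T.pull d δ = 0 := by
  obtain ⟨J, hJ, u, v, rfl⟩ := hd
  rw [pull_comp, hvan hJ hX _ (memUp_pull v hδ), pull_zero]

theorem factorsThru_of_pull_eq_zero {X J W P : C} (hJ : J ∈ I) {i : X ⟶ J} {p : J ⟶ W}
    {δ : T.ext W X} (hconf : T.conf i p δ) {c : P ⟶ W} (h : T.pull c δ = 0) :
    FactorsThru I c := by
  obtain ⟨k, hk⟩ := (T.pull_zero_iff hconf c).mp h
  exact ⟨J, hJ, k, p, hk.symm⟩

theorem factorsThru_of_push_eq_zero {X J W Y : C} (hJ : J ∈ I) {i : X ⟶ J} {p : J ⟶ W}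
    {δ : T.ext W X} (hconf : T.conf i p δ) {x : X ⟶ Y} (h : T.push x δ = 0) :
    FactorsThru I x := by
  obtain ⟨k, hk⟩ := (T.push_zero_iff hconf x).mp h
  exact ⟨J, hJ, i, k, hk.symm⟩

theorem pull_eq_of_functor_map_eq {Xc Z : Set C} (hvan : T.vanishUp I I Xc)
    {A B : ObjectProperty.FullSubcategory (· ∈ Z)} {c c' : A ⟶ B}
    (h : (CategoryTheory.Quotient.functor (idealRel I Z)).map c =
      (CategoryTheory.Quotient.functor _).map c')
    {Y : C} (hY : Y ∈ Xc) {δ : T.ext B.obj Y} (hδ : T.memUp I δ) :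
    T.pull c.hom δ = T.pull c'.hom δ := by
  refine CategoryTheory.Quotient.apply_eq_of_functor_map_eq (fun c : A ⟶ B => T.pull c.hom δ)
    (fun c c' hcc' => ?_) h
  rw [← sub_eq_zero, ← pull_sub]
  exact pull_eq_zero_of_factorsThru hvan hY hδ (factorsThru_of_compClosure hcc')

theorem exists_pull_eq_of_memUp {X J W J' W' : C} (hJ' : J' ∈ I) {f : X ⟶ J} {g : J ⟶ W}
    {δ : T.ext W X} {f' : X ⟶ J'} {g' : J' ⟶ W'} {δ' : T.ext W' X} (hconf : T.conf f g δ)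
    (hconf' : T.conf f' g' δ') (hδ : T.memUp I δ) : ∃ c : W ⟶ W', T.pull c δ' = δ := by
  obtain ⟨b, hb⟩ := (T.push_zero_iff hconf f').mp (hδ hJ' f')
  obtain ⟨c, -, hc⟩ := T.et3 (𝟙 X) b hconf hconf' (by rw [hb, Category.id_comp])
  exact ⟨c, hc.trans (push_id δ)⟩

theorem nonempty_iso_of_conflations {Z : Set C} {X J J' : C}
    {W W' : ObjectProperty.FullSubcategory (· ∈ Z)} (hJ : J ∈ I) (hJ' : J' ∈ I)
    {f : X ⟶ J} {g : J ⟶ W.obj} {δ : T.ext W.obj X} {f' : X ⟶ J'} {g' : J' ⟶ W'.obj}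
    {δ' : T.ext W'.obj X} (hconf : T.conf f g δ) (hconf' : T.conf f' g' δ')
    (hδ : T.memUp I δ) (hδ' : T.memUp I δ') :
    Nonempty ((CategoryTheory.Quotient.functor (idealRel I Z)).obj W ≅
      (CategoryTheory.Quotient.functor (idealRel I Z)).obj W') := by
  obtain ⟨c, hc⟩ := exists_pull_eq_of_memUp hJ' hconf hconf' hδ
  obtain ⟨c', hc'⟩ := exists_pull_eq_of_memUp hJ hconf' hconf hδ'
  refine ⟨⟨(CategoryTheory.Quotient.functor _).map (X := W) (Y := W') ⟨c⟩,
    (CategoryTheory.Quotient.functor _).map (X := W') (Y := W) ⟨c'⟩, ?_, ?_⟩⟩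
  · refine CategoryTheory.Quotient.sound _ (factorsThru_of_pull_eq_zero hJ hconf ?_)
    change T.pull (c ≫ c' - 𝟙 W.obj) δ = 0
    rw [pull_sub, pull_comp, pull_id, hc', hc, sub_self]
  · refine CategoryTheory.Quotient.sound _ (factorsThru_of_pull_eq_zero hJ' hconf' ?_)
    change T.pull (c' ≫ c - 𝟙 W'.obj) δ' = 0
    rw [pull_sub, pull_comp, pull_id, hc, hc', sub_self]

/-- In the paper's notation, `mid = I^X`, `cone = X⟨1⟩` and `lam = λ^X`. -/
structure ShiftData (T : ETStruct C) (I : Set C) (X : C) where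
  mid : C
  mid_mem : mid ∈ I
  infl : X ⟶ mid
  leftApprox : LeftApprox C I infl
  cone : C
  defl : mid ⟶ cone
  lam : T.ext cone X
  conf : T.conf infl defl lam

namespace ShiftData

variable {X Y Z : C} (SX : ShiftData T I X) (SY : ShiftData T I Y) (SZ : ShiftData T I Z)

theorem memUp_lam : T.memUp I SX.lam :=
  memUp_of_leftApprox SX.conf SX.leftApprox

def IsShift (x : X ⟶ Y) (c : SX.cone ⟶ SY.cone) : Prop :=
  T.pull c SY.lam = T.push x SX.lam

theorem exists_isShift (x : X ⟶ Y) : ∃ c, SX.IsShift SY x c := by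
  obtain ⟨b, hb⟩ := SX.leftApprox SY.mid_mem (x ≫ SY.infl)
  obtain ⟨c, -, hc⟩ := T.et3 x b SX.conf SY.conf hb
  exact ⟨c, hc⟩

theorem isShift_id : SX.IsShift SX (𝟙 X) (𝟙 SX.cone) := by
  rw [IsShift, pull_id, push_id]

variable {SX SY SZ}

theorem IsShift.comp {x : X ⟶ Y} {y : Y ⟶ Z} {c : SX.cone ⟶ SY.cone} {d : SY.cone ⟶ SZ.cone}
    (hc : SX.IsShift SY x c) (hd : SY.IsShift SZ y d) : SX.IsShift SZ (x ≫ y) (c ≫ d) := by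
  rw [IsShift, pull_comp, hd, pull_push, hc, ← push_comp]

theorem IsShift.factorsThru_sub {x : X ⟶ Y} {c c' : SX.cone ⟶ SY.cone}
    (hc : SX.IsShift SY x c) (hc' : SX.IsShift SY x c') : FactorsThru I (c - c') := by
  refine factorsThru_of_pull_eq_zero SY.mid_mem SY.conf ?_
  rw [pull_sub, hc, hc', sub_self]

theorem IsShift.of_factorsThru_sub {x x' : X ⟶ Y} {c : SX.cone ⟶ SY.cone}
    (hc : SX.IsShift SY x' c) (hx : FactorsThru I (x - x')) : SX.IsShift SY x c := by
  have h := push_eq_zero_of_factorsThru SX.memUp_lam hx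
  rw [push_sub, sub_eq_zero] at h
  rw [IsShift, hc, h]

theorem IsShift.factorsThru_sub_of_pull_eq {x x' : X ⟶ Y} {c c' : SX.cone ⟶ SY.cone}
    (hc : SX.IsShift SY x c) (hc' : SX.IsShift SY x' c')
    (h : T.pull c SY.lam = T.pull c' SY.lam) : FactorsThru I (x - x') := by
  refine factorsThru_of_push_eq_zero SX.mid_mem SX.conf ?_
  rw [push_sub, ← hc, ← hc', h, sub_self]

theorem exists_isShift_of_vanishUp {Xc : Set C} (hvan : T.vanishUp I I Xc) (hY : Y ∈ Xc)
    (c : SX.cone ⟶ SY.cone) : ∃ x, SX.IsShift SY x c := by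
  have h : T.pull (SX.defl ≫ c) SY.lam = 0 :=
    hvan SX.mid_mem hY _ (memUp_pull _ SY.memUp_lam)
  obtain ⟨b, hb⟩ := (T.pull_zero_iff SY.conf _).mp h
  obtain ⟨x, -, hx⟩ := T.et3op b c SX.conf SY.conf hb.symm
  exact ⟨x, hx⟩

end ShiftData

section QuotientShift

variable {Xc : Set C} (hcov : T.StronglyCovFinite I Xc)

noncomputable def shiftData (X : ObjectProperty.FullSubcategory (· ∈ Xc)) :
    ShiftData T I X.obj :=
  Classical.choice <| by
    obtain ⟨J, hJ, i, hi, W, p, δ, hconf⟩ := hcov X.property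
    exact ⟨⟨J, hJ, i, hi, W, p, δ, hconf⟩⟩

noncomputable def shiftObj (X : ObjectProperty.FullSubcategory (· ∈ Xc)) :
    ObjectProperty.FullSubcategory (· ∈ T.shiftPlus I Xc) :=
  ⟨(shiftData hcov X).cone, X.obj, (shiftData hcov X).mid, X.property,
    (shiftData hcov X).mid_mem, _, _, _, (shiftData hcov X).conf, (shiftData hcov X).memUp_lam⟩

noncomputable def shiftHom {X Y : ObjectProperty.FullSubcategory (· ∈ Xc)} (x : X ⟶ Y) :
    shiftObj hcov X ⟶ shiftObj hcov Y :=
  ⟨((shiftData hcov X).exists_isShift (shiftData hcov Y) x.hom).choose⟩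

theorem isShift_shiftHom {X Y : ObjectProperty.FullSubcategory (· ∈ Xc)} (x : X ⟶ Y) :
    (shiftData hcov X).IsShift (shiftData hcov Y) x.hom (shiftHom hcov x).hom :=
  ((shiftData hcov X).exists_isShift (shiftData hcov Y) x.hom).choose_spec

variable {hcov}

theorem map_shiftHom_eq {X Y : ObjectProperty.FullSubcategory (· ∈ Xc)} {x : X ⟶ Y}
    {c : shiftObj hcov X ⟶ shiftObj hcov Y} (hc : (shiftData hcov X).IsShift _ x.hom c.hom) :
    (CategoryTheory.Quotient.functor (idealRel I (T.shiftPlus I Xc))).map (shiftHom hcov x) =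
      (CategoryTheory.Quotient.functor _).map c :=
  CategoryTheory.Quotient.sound _ ((isShift_shiftHom hcov x).factorsThru_sub hc)

variable (hcov)

noncomputable def shiftToQuotient :
    ObjectProperty.FullSubcategory (· ∈ Xc) ⥤ IdealQuotient I (T.shiftPlus I Xc) where
  obj X := (CategoryTheory.Quotient.functor _).obj (shiftObj hcov X)
  map x := (CategoryTheory.Quotient.functor _).map (shiftHom hcov x)
  map_id X := by
    rw [← CategoryTheory.Functor.map_id]
    exact map_shiftHom_eq (shiftData hcov X).isShift_id
  map_comp x y := by
    rw [← CategoryTheory.Functor.map_comp]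
    exact map_shiftHom_eq ((isShift_shiftHom hcov x).comp (isShift_shiftHom hcov y))

noncomputable def quotientShift : IdealQuotient I Xc ⥤ IdealQuotient I (T.shiftPlus I Xc) :=
  CategoryTheory.Quotient.lift _ (shiftToQuotient hcov) fun _ _ _ x' hx =>
    map_shiftHom_eq ((isShift_shiftHom hcov x').of_factorsThru_sub hx)

variable {hcov}

theorem quotientShift_map_functor_map {X Y : ObjectProperty.FullSubcategory (· ∈ Xc)}
    (x : X ⟶ Y) :
    (quotientShift hcov).map ((CategoryTheory.Quotient.functor (idealRel I Xc)).map x) =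
      (CategoryTheory.Quotient.functor _).map (shiftHom hcov x) :=
  rfl

theorem nonempty_quotientShift_obj_iso {X : ObjectProperty.FullSubcategory (· ∈ Xc)}
    {J : C} (hJ : J ∈ I) {W : ObjectProperty.FullSubcategory (· ∈ T.shiftPlus I Xc)}
    {i : X.obj ⟶ J} {p : J ⟶ W.obj} {δ : T.ext W.obj X.obj} (hconf : T.conf i p δ)
    (hδ : T.memUp I δ) :
    Nonempty ((quotientShift hcov).obj
        ((CategoryTheory.Quotient.functor (idealRel I Xc)).obj X) ≅
      (CategoryTheory.Quotient.functor _).obj W) :=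
  nonempty_iso_of_conflations (W := shiftObj hcov X) (shiftData hcov X).mid_mem hJ
    (shiftData hcov X).conf hconf (shiftData hcov X).memUp_lam hδ

theorem quotientShift_essSurj : (quotientShift hcov).EssSurj where
  mem_essImage W := by
    obtain ⟨⟨W, X, J, hX, hJ, i, p, δ, hconf, hδ⟩⟩ := W
    exact ⟨_, nonempty_quotientShift_obj_iso (X := ⟨X, hX⟩) hJ hconf hδ⟩

variable (hvan : T.vanishUp I I Xc)
include hvan

theorem quotientShift_faithful : (quotientShift hcov).Faithful where
  map_injective {X Y} := by
    obtain ⟨X⟩ := X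
    obtain ⟨Y⟩ := Y
    intro f f' h
    obtain ⟨x, rfl⟩ := (CategoryTheory.Quotient.functor _).map_surjective f
    obtain ⟨x', rfl⟩ := (CategoryTheory.Quotient.functor _).map_surjective f'
    rw [quotientShift_map_functor_map, quotientShift_map_functor_map] at h
    have hpull := pull_eq_of_functor_map_eq hvan h Y.property (shiftData hcov Y).memUp_lam
    exact CategoryTheory.Quotient.sound _
      ((isShift_shiftHom hcov x).factorsThru_sub_of_pull_eq (isShift_shiftHom hcov x') hpull)

theorem quotientShift_full : (quotientShift hcov).Full where
  map_surjective {X Y} c := by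
    obtain ⟨X⟩ := X
    obtain ⟨Y⟩ := Y
    obtain ⟨c, rfl⟩ := (CategoryTheory.Quotient.functor _).map_surjective c
    obtain ⟨x, hx⟩ := (shiftData hcov X).exists_isShift_of_vanishUp hvan Y.property c.hom
    exact ⟨(CategoryTheory.Quotient.functor _).map (X := X) (Y := Y) ⟨x⟩, map_shiftHom_eq hx⟩

end QuotientShift

end ETStruct

open ETStruct in
theorem statement19_general (T : ETStruct C) (I Xc : Set C)
    (hcov : T.StronglyCovFinite I Xc)
    (hvan : T.vanishUp I I Xc) :
    ∃ F : IdealQuotient I Xc ⥤ IdealQuotient I (T.shiftPlus I Xc),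
      F.IsEquivalence ∧
      -- `F` sends an object `X` to the cone of a left `I`-approximation inflation of `X`
      ∀ (X : ObjectProperty.FullSubcategory (· ∈ Xc)) (IX : C) (_ : IX ∈ I) (i : X.obj ⟶ IX)
        (_ : LeftApprox C I i) (W : C) (p : IX ⟶ W) (lam : T.ext W X.obj)
        (_ : T.conf i p lam) (_ : T.memUp I lam) (hW : W ∈ T.shiftPlus I Xc),
        Nonempty (F.obj ((CategoryTheory.Quotient.functor (idealRel I Xc)).obj X) ≅
          (CategoryTheory.Quotient.functor (idealRel I (T.shiftPlus I Xc))).obj ⟨W, hW⟩) := by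
  refine ⟨quotientShift hcov, ⟨quotientShift_faithful hvan, quotientShift_full hvan,
    quotientShift_essSurj⟩, ?_⟩
  intro X IX hIX i _ W p lam hconf hlam hW
  exact nonempty_quotientShift_obj_iso (W := ⟨W, hW⟩) hIX hconf hlam

open ETStruct in
/-- If `I ⊆ X` is strongly covariantly finite and `E^I(I, X) = 0`,
then `⟨1⟩ : X/[I] ⥤ X⟨1⟩/[I]` is an equivalence. -/
theorem statement19 (T : ETStruct C) (I Xc : Set C) (hIX : I ⊆ Xc)
    (hcov : T.StronglyCovFinite I Xc)
    (hvan : T.vanishUp I I Xc) :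
    ∃ F : IdealQuotient I Xc ⥤ IdealQuotient I (T.shiftPlus I Xc),
      F.IsEquivalence ∧
      -- `F` sends an object `X` to the cone of a left `I`-approximation inflation of `X`
      ∀ (X : ObjectProperty.FullSubcategory (· ∈ Xc)) (IX : C) (_ : IX ∈ I) (i : X.obj ⟶ IX)
        (_ : LeftApprox C I i) (W : C) (p : IX ⟶ W) (lam : T.ext W X.obj)
        (_ : T.conf i p lam) (_ : T.memUp I lam) (hW : W ∈ T.shiftPlus I Xc),
        Nonempty (F.obj ((CategoryTheory.Quotient.functor (idealRel I Xc)).obj X) ≅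
          (CategoryTheory.Quotient.functor (idealRel I (T.shiftPlus I Xc))).obj ⟨W, hW⟩) :=
  statement19_general T I Xc hcov hvan
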